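/- arXiv:2011.06562 — 2 statements merged into one kernel-verified Lean document; each statement's English description precedes it below -/
import Mathlib

section
/- Every unipotent symplectic matrix is the exponential of a nilpotent infinitesimally symplectic matrix of the form J·S with S symmetric: if M ∈ M_{2n}(ℝ) satisfies MᵀJ_{2n}M = J_{2n} and (M − I_{2n})^{2n} = 0, then there exists a symmetric matrix S ∈ M_{2n}(ℝ) such that J_{2n}·S is nilpotent and M = exp(J_{2n}·S). -/
/-!
For unipotent `M` put `N = log M = ∑_{0<k<2n} (-1)^(k+1) (M - 1)^k / k`, the logarithm
series truncated at the nilpotency order. The series for `exp` and `log` truncated at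
order `m` satisfy `exp ∘ log ≡ 1 + X` and `log ∘ (exp - 1) ≡ X` modulo `X^m`; each
congruence follows by comparing derivatives, since `(1 + X) log' ≡ 1` and `exp' ≡ exp`.
Hence `N` is nilpotent with `exp N = M`, and `log (exp a) = a` for nilpotent `a`.
Symplecticity gives `Mᵀ = J M⁻¹ J⁻¹ = exp (-J N J⁻¹)`, so taking `log` of both sides
`Nᵀ = -J N J⁻¹`: the matrix `S = J⁻¹ N` is symmetric and `J S = N`.
-/

open Matrix

/-- The standard symplectic matrix `J_{2n}`: the `2n × 2n` block-diagonal matrix consisting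
of `n` copies of the `2 × 2` block `[[0,-1],[1,0]]`. -/
def Jstd (n : ℕ) : Matrix (Fin (2 * n)) (Fin (2 * n)) ℝ :=
  Matrix.of fun i j =>
    if i.val = j.val + 1 ∧ j.val % 2 = 0 then 1
    else if j.val = i.val + 1 ∧ i.val % 2 = 0 then -1
    else 0

open Polynomial

theorem Polynomial.coeff_X_mul_derivative {R : Type*} [CommSemiring R] (p : R[X]) (d : ℕ) :
    (X * derivative p).coeff d = d * p.coeff d := by
  cases d with
  | zero => simp
  | succ d => rw [coeff_X_mul, coeff_derivative, mul_comm]; push_cast; ring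

section CoefficientRecursion

variable {K : Type*} [Field K] [CharZero K]

theorem X_pow_succ_dvd_of_X_pow_dvd_derivative {D : K[X]} {k : ℕ} (h₀ : D.coeff 0 = 0)
    (h : X ^ k ∣ derivative D) : X ^ (k + 1) ∣ D := by
  rw [X_pow_dvd_iff] at h ⊢
  rintro (_ | d) hd
  · exact h₀
  · have hcoeff := h d (by omega)
    rw [coeff_derivative] at hcoeff
    have : ((d : K) + 1) ≠ 0 := Nat.cast_add_one_ne_zero d
    simpa [this] using hcoeff

theorem X_pow_succ_dvd_of_X_pow_dvd_one_add_X_mul_derivative_sub {D : K[X]} {k : ℕ}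
    (h₀ : D.coeff 0 = 0) (h : X ^ k ∣ (1 + X) * derivative D - D) : X ^ (k + 1) ∣ D := by
  rw [X_pow_dvd_iff] at h ⊢
  intro d hd
  induction d with
  | zero => exact h₀
  | succ d ih =>
    have hcoeff := h d (by omega)
    rw [coeff_sub, add_mul, one_mul, coeff_add, coeff_X_mul_derivative, coeff_derivative,
      ih (by omega)] at hcoeff
    have : ((d : K) + 1) ≠ 0 := Nat.cast_add_one_ne_zero d
    simpa [this] using hcoeff

end CoefficientRecursion

theorem X_dvd_trunc_log (m : ℕ) : X ∣ PowerSeries.trunc m (PowerSeries.log ℚ) := by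
  rw [X_dvd_iff, PowerSeries.coeff_trunc]
  split_ifs <;> simp

theorem one_add_X_mul_derivative_trunc_log (k : ℕ) :
    (1 + X) * derivative (PowerSeries.trunc (k + 1) (PowerSeries.log ℚ)) = 1 - (-X) ^ k := by
  rw [← PowerSeries.trunc_derivative, PowerSeries.deriv_log]
  have : PowerSeries.trunc k (PowerSeries.mk fun n ↦ algebraMap ℚ ℚ ((-1 : ℚ) ^ n))
      = ∑ i ∈ Finset.range k, (-X : ℚ[X]) ^ i := by
    conv_lhs => rw [← eval₂_C_X (p := PowerSeries.trunc _ _)]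
    rw [PowerSeries.eval₂_trunc_eq_sum_range]
    refine Finset.sum_congr rfl fun i _ => ?_
    simp [neg_pow (X : ℚ[X])]
  rw [this]
  linear_combination -(geom_sum_mul (-X : ℚ[X]) k)

theorem trunc_exp_succ (k : ℕ) :
    PowerSeries.trunc (k + 1) (PowerSeries.exp ℚ)
      = PowerSeries.trunc k (PowerSeries.exp ℚ) + C (k.factorial : ℚ)⁻¹ * X ^ k := by
  rw [PowerSeries.trunc_succ, PowerSeries.coeff_exp, ← C_mul_X_pow_eq_monomial]
  simp

theorem derivative_trunc_exp_succ (k : ℕ) :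
    derivative (PowerSeries.trunc (k + 1) (PowerSeries.exp ℚ))
      = PowerSeries.trunc k (PowerSeries.exp ℚ) := by
  rw [← PowerSeries.trunc_derivative, PowerSeries.derivative_exp]

theorem X_pow_dvd_trunc_exp_comp_trunc_log_sub (m : ℕ) :
    X ^ m ∣ (PowerSeries.trunc m (PowerSeries.exp ℚ)).comp
      (PowerSeries.trunc m (PowerSeries.log ℚ)) - (1 + X) := by
  cases m with
  | zero => simp
  | succ k =>
  have hF := trunc_exp_succ k
  have hF' := derivative_trunc_exp_succ k
  set F := PowerSeries.trunc (k + 1) (PowerSeries.exp ℚ)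
  set E := PowerSeries.trunc k (PowerSeries.exp ℚ)
  set L := PowerSeries.trunc (k + 1) (PowerSeries.log ℚ)
  have hL : X ∣ L := X_dvd_trunc_log (k + 1)
  have hdF : derivative (F.comp L) = derivative L * E.comp L := by
    rw [derivative_comp, hF']
  apply X_pow_succ_dvd_of_X_pow_dvd_one_add_X_mul_derivative_sub
  · rw [coeff_zero_eq_eval_zero, eval_sub, eval_comp, ← coeff_zero_eq_eval_zero,
      X_dvd_iff.1 hL, ← coeff_zero_eq_eval_zero, PowerSeries.coeff_trunc]
    simp
  · have hode : (1 + X) * derivative (F.comp L - (1 + X)) - (F.comp L - (1 + X))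
        = -((-X) ^ k * E.comp L) - C (k.factorial : ℚ)⁻¹ * L ^ k := by
      rw [derivative_sub, hdF, mul_sub, ← mul_assoc, one_add_X_mul_derivative_trunc_log, hF,
        add_comp, mul_comp, C_comp, X_pow_comp]
      simp only [derivative_add, derivative_one, derivative_X]
      ring
    rw [hode, neg_pow]
    exact dvd_sub (dvd_neg.2 (dvd_mul_of_dvd_left (dvd_mul_left _ _) _))
      (dvd_mul_of_dvd_right (pow_dvd_pow_of_dvd hL k) _)

theorem X_pow_dvd_trunc_log_comp_trunc_exp_sub_one_sub (m : ℕ) :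
    X ^ m ∣ (PowerSeries.trunc m (PowerSeries.log ℚ)).comp
      (PowerSeries.trunc m (PowerSeries.exp ℚ) - 1) - X := by
  cases m with
  | zero => simp
  | succ k =>
  have hF := trunc_exp_succ k
  have hF' := derivative_trunc_exp_succ k
  set F := PowerSeries.trunc (k + 1) (PowerSeries.exp ℚ)
  set E := PowerSeries.trunc k (PowerSeries.exp ℚ)
  set L := PowerSeries.trunc (k + 1) (PowerSeries.log ℚ)
  have hY : X ∣ F - 1 := by
    rw [X_dvd_iff, coeff_sub, PowerSeries.coeff_trunc]
    simp
  have hlog : (1 + (F - 1)) * (derivative L).comp (F - 1) = 1 - (-(F - 1)) ^ k := by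
    simpa using congrArg (·.comp (F - 1)) (one_add_X_mul_derivative_trunc_log k)
  apply X_pow_succ_dvd_of_X_pow_dvd_derivative
  · rw [coeff_zero_eq_eval_zero, eval_sub, eval_comp, ← coeff_zero_eq_eval_zero (F - 1),
      X_dvd_iff.1 hY, ← coeff_zero_eq_eval_zero, X_dvd_iff.1 (X_dvd_trunc_log _)]
    simp
  · have hode : derivative (L.comp (F - 1) - X)
        = -(-(F - 1)) ^ k - C (k.factorial : ℚ)⁻¹ * X ^ k * (derivative L).comp (F - 1) := by
      rw [derivative_sub, derivative_comp, derivative_sub, derivative_one, sub_zero, hF',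
        derivative_X, show E = F - C (k.factorial : ℚ)⁻¹ * X ^ k by rw [hF]; ring]
      linear_combination hlog
    rw [hode]
    exact dvd_sub (dvd_neg.2 (pow_dvd_pow_of_dvd (dvd_neg.2 hY) k))
      (dvd_mul_of_dvd_left (dvd_mul_left _ _) _)

theorem NormedSpace.exp_eq_isNilpotent_exp {𝔸 : Type*} [Ring 𝔸] [Algebra ℚ 𝔸]
    [TopologicalSpace 𝔸] [IsTopologicalRing 𝔸] {a : 𝔸} (ha : IsNilpotent a) :
    NormedSpace.exp a = IsNilpotent.exp a := by
  obtain ⟨k, hk⟩ := ha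
  rw [NormedSpace.exp_eq_tsum_rat, IsNilpotent.exp_eq_sum hk]
  exact tsum_eq_sum fun j hj => by
    rw [pow_eq_zero_of_le (by simpa using hj) hk, smul_zero]

theorem IsNilpotent.exp_units_conj {A : Type*} [Ring A] [Module ℚ A] (u : Aˣ) {a : A}
    (ha : IsNilpotent a) : IsNilpotent.exp (u * a * ↑u⁻¹) = u * IsNilpotent.exp a * ↑u⁻¹ := by
  simpa only [ConjAct.units_smul_def, ConjAct.ofConjAct_toConjAct] using
    IsNilpotent.exp_smul (ConjAct.toConjAct u) ha

theorem Matrix.aeval_transpose {R α n : Type*} [CommSemiring R] [CommSemiring α] [Algebra R α]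
    [Fintype n] [DecidableEq n] (x : Matrix n n α) (p : R[X]) :
    (aeval x p)ᵀ = aeval xᵀ p := by
  apply MulOpposite.op_injective
  rw [← aeval_op_apply]
  exact (aeval_algHom_apply (Matrix.transposeAlgEquiv n R α).toAlgHom x p).symm

section UnipotentLog

variable {A : Type*} [Ring A] [Algebra ℚ A]

theorem aeval_pow_eq_zero_of_X_dvd {x : A} {m : ℕ} {p : ℚ[X]} (hp : X ∣ p) (hx : x ^ m = 0) :
    aeval x p ^ m = 0 := by
  obtain ⟨q, rfl⟩ := hp
  rw [← map_pow, mul_pow, map_mul, map_pow, aeval_X, hx, zero_mul]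

theorem IsNilpotent.exp_eq_aeval_trunc {a : A} {m : ℕ} (ha : a ^ m = 0) :
    IsNilpotent.exp a = aeval a (PowerSeries.trunc m (PowerSeries.exp ℚ)) := by
  rw [IsNilpotent.exp_eq_sum ha, aeval_def, PowerSeries.eval₂_trunc_eq_sum_range]
  simp [PowerSeries.coeff_exp, Algebra.smul_def]

noncomputable def unipotentLog (m : ℕ) (u : A) : A :=
  aeval (u - 1) (PowerSeries.trunc m (PowerSeries.log ℚ))

theorem unipotentLog_pow_eq_zero {u : A} {m : ℕ} (hu : (u - 1) ^ m = 0) :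
    unipotentLog m u ^ m = 0 :=
  aeval_pow_eq_zero_of_X_dvd (X_dvd_trunc_log m) hu

theorem exp_unipotentLog {u : A} {m : ℕ} (hu : (u - 1) ^ m = 0) :
    IsNilpotent.exp (unipotentLog m u) = u := by
  obtain ⟨q, hq⟩ := X_pow_dvd_trunc_exp_comp_trunc_log_sub m
  rw [IsNilpotent.exp_eq_aeval_trunc (unipotentLog_pow_eq_zero hu), unipotentLog,
    ← aeval_comp, sub_eq_iff_eq_add.1 hq]
  simp [hu]

theorem unipotentLog_exp {a : A} {m : ℕ} (ha : a ^ m = 0) :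
    unipotentLog m (IsNilpotent.exp a) = a := by
  obtain ⟨q, hq⟩ := X_pow_dvd_trunc_log_comp_trunc_exp_sub_one_sub m
  rw [unipotentLog, IsNilpotent.exp_eq_aeval_trunc ha, ← map_one (aeval (R := ℚ) a), ← map_sub,
    ← aeval_comp, sub_eq_iff_eq_add.1 hq]
  simp [ha]

end UnipotentLog

section Transpose

variable {ι α : Type*} [Fintype ι] [DecidableEq ι] [CommRing α] [Algebra ℚ α]

theorem transpose_unipotentLog (m : ℕ) (M : Matrix ι ι α) :
    (unipotentLog m M)ᵀ = unipotentLog m Mᵀ := by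
  rw [unipotentLog, aeval_transpose, transpose_sub, transpose_one, unipotentLog]

theorem transpose_unipotentLog_eq_conj_neg {J : (Matrix ι ι α)ˣ} {M : Matrix ι ι α} {m : ℕ}
    (hM : Mᵀ * J * M = J) (hu : (M - 1) ^ m = 0) :
    (unipotentLog m M)ᵀ = J * -unipotentLog m M * (↑J⁻¹ : Matrix ι ι α) := by
  set N := unipotentLog m M
  have hN : N ^ m = 0 := unipotentLog_pow_eq_zero hu
  have hMN : M * IsNilpotent.exp (-N) = 1 := by
    conv_lhs => rw [← exp_unipotentLog hu]
    exact IsNilpotent.exp_mul_exp_neg_self ⟨m, hN⟩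
  have hMT : Mᵀ = IsNilpotent.exp (J * -N * (↑J⁻¹ : Matrix ι ι α)) := by
    rw [IsNilpotent.exp_units_conj J (IsNilpotent.neg ⟨m, hN⟩)]
    calc Mᵀ = Mᵀ * J * (M * IsNilpotent.exp (-N)) * (↑J⁻¹ : Matrix ι ι α) := by
          rw [hMN, mul_one, Units.mul_inv_cancel_right]
      _ = J * IsNilpotent.exp (-N) * (↑J⁻¹ : Matrix ι ι α) := by rw [← mul_assoc, hM]
  rw [transpose_unipotentLog, hMT, unipotentLog_exp]
  rw [Units.conj_pow, neg_pow, hN, mul_zero, mul_zero, zero_mul]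

end Transpose

theorem Jstd_transpose (n : ℕ) : (Jstd n)ᵀ = -Jstd n := by
  ext i j
  simp only [Jstd, transpose_apply, of_apply, Matrix.neg_apply]
  split_ifs <;> first | omega | norm_num

theorem Jstd_mul_self (n : ℕ) : Jstd n * Jstd n = -1 := by
  ext i j
  obtain ⟨k, hk⟩ : ∃ k : Fin (2 * n), (k : ℕ) / 2 = i / 2 ∧ (k : ℕ) ≠ i :=
    ⟨⟨if (i : ℕ) % 2 = 0 then i + 1 else i - 1, by split_ifs <;> omega⟩,
      by dsimp only; split_ifs <;> omega⟩
  have hrow : ∀ l, l ≠ k → Jstd n i l = 0 := by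
    intro l hl
    rw [Ne, Fin.ext_iff] at hl
    simp only [Jstd, of_apply]
    split_ifs <;> first | rfl | omega
  rw [mul_apply, Finset.sum_eq_single k (fun l _ hl => by rw [hrow l hl, zero_mul]) (by simp),
    Matrix.neg_apply, one_apply]
  simp only [Jstd, of_apply, Fin.ext_iff]
  split_ifs <;> first | omega | norm_num

/-- Every unipotent symplectic matrix is the exponential of a nilpotent infinitesimally
symplectic matrix of the form `J·S` with `S` symmetric: if `Mᵀ J_{2n} M = J_{2n}` and
`(M − I)^{2n} = 0`, then there is a symmetric `S` with `J_{2n}·S` nilpotent and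
`M = exp(J_{2n}·S)`. -/
theorem unipotent_symplectic_is_exp (n : ℕ) (M : Matrix (Fin (2 * n)) (Fin (2 * n)) ℝ)
    (hM : Mᵀ * Jstd n * M = Jstd n)
    (hunip : (M - 1) ^ (2 * n) = 0) :
    ∃ S : Matrix (Fin (2 * n)) (Fin (2 * n)) ℝ,
      Sᵀ = S ∧ IsNilpotent (Jstd n * S) ∧ M = NormedSpace.exp (Jstd n * S) := by
  let J : (Matrix (Fin (2 * n)) (Fin (2 * n)) ℝ)ˣ :=
    ⟨Jstd n, -Jstd n, by simp [Jstd_mul_self], by simp [Jstd_mul_self]⟩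
  set N := unipotentLog (2 * n) M
  have hN : IsNilpotent N := ⟨2 * n, unipotentLog_pow_eq_zero hunip⟩
  have hNT : Nᵀ = Jstd n * -N * -Jstd n :=
    transpose_unipotentLog_eq_conj_neg (J := J) hM hunip
  have hJS : Jstd n * (-Jstd n * N) = N := J.mul_inv_cancel_left N
  refine ⟨-Jstd n * N, ?_, by rwa [hJS], ?_⟩
  · rw [transpose_mul, hNT, transpose_neg, Jstd_transpose, neg_neg, mul_assoc _ _ (Jstd n),
      neg_mul, Jstd_mul_self, neg_neg, mul_one, mul_neg, neg_mul]
  · rw [hJS, NormedSpace.exp_eq_isNilpotent_exp hN, exp_unipotentLog hunip]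
end

section
/- A loop of unipotent symplectic matrices is null-homotopic in the symplectic group: if γ : [0,1] → M_{2n}(ℝ) is continuous with γ(0) = γ(1), γ(t)ᵀJ_{2n}γ(t) = J_{2n} and (γ(t) − I_{2n})^{2n} = 0 for every t ∈ [0,1], then there is a continuous map H : [0,1] × [0,1] → M_{2n}(ℝ) such that H(0,t) = γ(t) for all t, H(1,·) is a constant map, H(s,0) = H(s,1) for every s, and every matrix H(s,t) is symplectic (H(s,t)ᵀJ_{2n}H(s,t) = J_{2n}). -/
open Matrix unitInterval

namespace UnipSympAux

open Polynomial Finset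

/-- The binomial coefficient polynomial `x ↦ x(x-1)⋯(x-k+1)/k!`. -/
noncomputable def bp (k : ℕ) : Polynomial ℝ := (k.factorial : ℝ)⁻¹ • descPochhammer ℝ k

lemma bp_eval_nat (k m : ℕ) : (bp k).eval (m : ℝ) = (m.choose k : ℝ) := by
  have hk : (k.factorial : ℝ) ≠ 0 := by positivity
  simp only [bp, Polynomial.eval_smul, smul_eq_mul,
    descPochhammer_eval_eq_descFactorial ℝ m k,
    Nat.descFactorial_eq_factorial_mul_choose]
  push_cast
  field_simp

/-- Truncated binomial series `(1+A)^x`. -/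
noncomputable def rp (n : ℕ) (x : ℝ) (A : Matrix (Fin (2 * n)) (Fin (2 * n)) ℝ) :
    Matrix (Fin (2 * n)) (Fin (2 * n)) ℝ :=
  ∑ k ∈ Finset.range (2 * n), (bp k).eval x • A ^ k

lemma pow_eq_zero_of_le {n : ℕ} {A : Matrix (Fin (2 * n)) (Fin (2 * n)) ℝ}
    (hA : A ^ (2 * n) = 0) {k : ℕ} (hk : 2 * n ≤ k) : A ^ k = 0 := by
  rw [← Nat.sub_add_cancel hk, pow_add, hA, mul_zero]

lemma rp_nat {n : ℕ} {A : Matrix (Fin (2 * n)) (Fin (2 * n)) ℝ}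
    (hA : A ^ (2 * n) = 0) (m : ℕ) : rp n (m : ℝ) A = (1 + A) ^ m := by
  classical
  set K := max (m + 1) (2 * n) with hK
  have h1 : rp n (m : ℝ) A = ∑ k ∈ range K, (m.choose k : ℝ) • A ^ k := by
    rw [rp]
    have hsub : range (2 * n) ⊆ range K := by
      exact range_subset_range.2 (le_max_right _ _)
    rw [Finset.sum_subset hsub]
    · exact Finset.sum_congr rfl fun k _ => by rw [bp_eval_nat]
    · intro k _ hk
      have hk2 : 2 * n ≤ k := by
        by_contra h
        exact hk (Finset.mem_range.2 (lt_of_not_ge h))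
      rw [pow_eq_zero_of_le hA hk2, smul_zero]
  have h2 : (1 + A) ^ m = ∑ k ∈ range K, (m.choose k : ℝ) • A ^ k := by
    have hcomm : Commute A (1 : Matrix (Fin (2 * n)) (Fin (2 * n)) ℝ) := Commute.one_right A
    have := hcomm.add_pow m
    rw [add_comm A 1] at this
    rw [this]
    have hsub : range (m + 1) ⊆ range K := range_subset_range.2 (le_max_left _ _)
    rw [Finset.sum_subset hsub]
    · refine Finset.sum_congr rfl fun k _ => ?_
      rw [one_pow, mul_one, Nat.cast_smul_eq_nsmul ℝ, nsmul_eq_mul]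
      exact ((Nat.cast_commute (m.choose k) (A ^ k)).eq).symm
    · intro k _ hk
      have hk2 : m < k := by
        by_contra h
        exact hk (Finset.mem_range.2 (Nat.lt_succ_of_le (le_of_not_gt h)))
      rw [Nat.choose_eq_zero_of_lt hk2]
      simp
  rw [h1, h2]

lemma rp_mul_rp {n : ℕ} (x : ℝ) {A B : Matrix (Fin (2 * n)) (Fin (2 * n)) ℝ}
    (hc : Commute A B) (hA : A ^ (2 * n) = 0) (hB : B ^ (2 * n) = 0)
    (hAB : (1 + A) * (1 + B) = 1) : rp n x A * rp n x B = 1 := by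
  classical
  set PA : Matrix (Fin (2 * n)) (Fin (2 * n)) (Polynomial ℝ) :=
    ∑ k ∈ range (2 * n), bp k • (A.map Polynomial.C) ^ k with hPAdef
  set PB : Matrix (Fin (2 * n)) (Fin (2 * n)) (Polynomial ℝ) :=
    ∑ k ∈ range (2 * n), bp k • (B.map Polynomial.C) ^ k with hPBdef
  have hbase : ∀ (y : ℝ) (M : Matrix (Fin (2 * n)) (Fin (2 * n)) ℝ),
      (evalRingHom y).mapMatrix (M.map Polynomial.C) = M := by
    intro y M
    ext i j
    simp [RingHom.mapMatrix_apply, Matrix.map_apply]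
  have hsmul : ∀ (y : ℝ) (p : Polynomial ℝ)
      (M : Matrix (Fin (2 * n)) (Fin (2 * n)) (Polynomial ℝ)),
      (evalRingHom y).mapMatrix (p • M) = p.eval y • (evalRingHom y).mapMatrix M := by
    intro y p M
    ext i j
    simp [RingHom.mapMatrix_apply, Matrix.map_apply, Matrix.smul_apply]
  have hmapA : ∀ y : ℝ, (evalRingHom y).mapMatrix PA = rp n y A := by
    intro y
    rw [hPAdef, map_sum, rp]
    refine Finset.sum_congr rfl fun k _ => ?_
    rw [hsmul, map_pow, hbase]
  have hmapB : ∀ y : ℝ, (evalRingHom y).mapMatrix PB = rp n y B := by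
    intro y
    rw [hPBdef, map_sum, rp]
    refine Finset.sum_congr rfl fun k _ => ?_
    rw [hsmul, map_pow, hbase]
  have hcomm1 : Commute (1 + A) (1 + B) :=
    (Commute.one_right (1 + A)).add_right ((Commute.one_left B).add_left hc)
  have hnat : ∀ m : ℕ, (evalRingHom ((m : ℕ) : ℝ)).mapMatrix (PA * PB) = 1 := by
    intro m
    rw [_root_.map_mul, hmapA, hmapB, rp_nat hA m, rp_nat hB m, ← hcomm1.mul_pow, hAB, one_pow]
  have hkey : PA * PB = 1 := by
    refine Matrix.ext fun i j => ?_
    have hroot : {y : ℝ | IsRoot ((PA * PB) i j - (1 : Matrix (Fin (2 * n)) (Fin (2 * n)) (Polynomial ℝ)) i j) y}.Infinite := by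
      apply Set.infinite_of_injective_forall_mem (f := fun m : ℕ => (m : ℝ))
        Nat.cast_injective
      intro m
      have h := congrArg (fun M : Matrix (Fin (2 * n)) (Fin (2 * n)) ℝ => M i j) (hnat m)
      simp only [RingHom.mapMatrix_apply, Matrix.map_apply] at h
      have h' : Polynomial.eval ((m : ℕ) : ℝ) ((PA * PB) i j) =
          (1 : Matrix (Fin (2 * n)) (Fin (2 * n)) ℝ) i j := h
      simp only [Set.mem_setOf_eq, IsRoot, Polynomial.eval_sub, h']
      by_cases hij : i = j <;> simp [Matrix.one_apply, hij]
    have hz := Polynomial.eq_zero_of_infinite_isRoot _ hroot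
    exact sub_eq_zero.mp hz
  have := congrArg ((evalRingHom x).mapMatrix) hkey
  rwa [_root_.map_mul, hmapA, hmapB, _root_.map_one] at this

lemma rp_transpose {n : ℕ} (x : ℝ) (A : Matrix (Fin (2 * n)) (Fin (2 * n)) ℝ) :
    (rp n x A)ᵀ = rp n x Aᵀ := by
  rw [rp, rp, Matrix.transpose_sum]
  exact Finset.sum_congr rfl fun k _ => by rw [Matrix.transpose_smul, Matrix.transpose_pow]

lemma conj_pow {n : ℕ} {M W J : Matrix (Fin (2 * n)) (Fin (2 * n)) ℝ}
    (h : Mᵀ * J = J * W) (k : ℕ) : (Mᵀ - 1) ^ k * J = J * (W - 1) ^ k := by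
  induction k with
  | zero => simp
  | succ k ih =>
    have h1 : (Mᵀ - 1) * J = J * (W - 1) := by
      rw [sub_mul, mul_sub, one_mul, mul_one, h]
    rw [pow_succ, pow_succ, mul_assoc, h1, ← mul_assoc, ih, mul_assoc]

lemma rp_conj {n : ℕ} (x : ℝ) {M W J : Matrix (Fin (2 * n)) (Fin (2 * n)) ℝ}
    (h : Mᵀ * J = J * W) : rp n x (Mᵀ - 1) * J = J * rp n x (W - 1) := by
  rw [rp, rp, Finset.sum_mul, Finset.mul_sum]
  refine Finset.sum_congr rfl fun k _ => ?_
  rw [smul_mul_assoc, conj_pow h k, mul_smul_comm]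

end UnipSympAux

open UnipSympAux

/-- A loop of unipotent symplectic matrices is null-homotopic within the symplectic group:
if `γ : [0,1] → M_{2n}(ℝ)` is a continuous loop with every `γ(t)` symplectic and unipotent,
then there is a continuous homotopy `H` from `γ` to a constant loop, through loops of
symplectic matrices. -/
theorem unipotent_symplectic_loop_nullhomotopic (n : ℕ)
    (γ : unitInterval → Matrix (Fin (2 * n)) (Fin (2 * n)) ℝ)
    (hγc : Continuous γ) (hloop : γ 0 = γ 1)
    (hsymp : ∀ t, (γ t)ᵀ * Jstd n * γ t = Jstd n)
    (hunip : ∀ t, (γ t - 1) ^ (2 * n) = 0) :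
    ∃ H : unitInterval → unitInterval → Matrix (Fin (2 * n)) (Fin (2 * n)) ℝ,
      Continuous (fun p : unitInterval × unitInterval => H p.1 p.2) ∧
      (∀ t, H 0 t = γ t) ∧
      (∃ c, ∀ t, H 1 t = c) ∧
      (∀ s, H s 0 = H s 1) ∧
      (∀ s t, (H s t)ᵀ * Jstd n * H s t = Jstd n) := by
  classical
  refine ⟨fun s t => rp n (1 - (s : ℝ)) (γ t - 1), ?_, ?_, ?_, ?_, ?_⟩
  · -- continuity
    simp only [rp]
    apply continuous_finset_sum
    intro k _
    refine Continuous.fun_smul ?_ ?_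
    · exact (bp k).continuous.comp
        (continuous_const.sub (continuous_subtype_val.comp continuous_fst))
    · exact ((hγc.comp continuous_snd).sub continuous_const).pow k
  · -- H 0 t = γ t
    intro t
    show rp n (1 - ((0 : unitInterval) : ℝ)) (γ t - 1) = γ t
    have h0 : (1 : ℝ) - ((0 : unitInterval) : ℝ) = ((1 : ℕ) : ℝ) := by
      simp
    have e : (1 : Matrix (Fin (2 * n)) (Fin (2 * n)) ℝ) + (γ t - 1) = γ t := by abel
    rw [h0, rp_nat (hunip t) 1, pow_one, e]
  · -- H 1 · constant
    refine ⟨1, fun t => ?_⟩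
    show rp n (1 - ((1 : unitInterval) : ℝ)) (γ t - 1) = 1
    have h0 : (1 : ℝ) - ((1 : unitInterval) : ℝ) = ((0 : ℕ) : ℝ) := by
      simp
    rw [h0, rp_nat (hunip t) 0, pow_zero]
  · -- loop condition
    intro s
    show rp n (1 - (s : ℝ)) (γ 0 - 1) = rp n (1 - (s : ℝ)) (γ 1 - 1)
    rw [hloop]
  · -- symplecticity
    intro s t
    show (rp n (1 - (s : ℝ)) (γ t - 1))ᵀ * Jstd n * rp n (1 - (s : ℝ)) (γ t - 1) = Jstd n
    set x : ℝ := 1 - (s : ℝ)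
    set M := γ t with hM
    set N := M - 1 with hN
    set W : Matrix (Fin (2 * n)) (Fin (2 * n)) ℝ :=
      ∑ k ∈ Finset.range (2 * n), (-N) ^ k with hW
    have hNW : Commute N W := by
      refine Commute.sum_right _ _ _ fun k _ => ?_
      exact ((Commute.refl N).neg_right).pow_right k
    have hWM : W * M = 1 := by
      have hgeom := geom_sum_mul (-N) (2 * n)
      have heven : (-N) ^ (2 * n) = N ^ (2 * n) := (even_two_mul n).neg_pow N
      rw [heven, hunip t] at hgeom
      have h2 : -N - 1 = -M := by rw [hN]; abel
      rw [h2, zero_sub, mul_neg] at hgeom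
      exact neg_injective hgeom
    have hMWc : Commute M W := by
      have h1 : Commute N W := hNW
      have h2 : Commute (N + 1) W := h1.add_left (Commute.one_left W)
      have h3 : N + 1 = M := by rw [hN]; abel
      rwa [h3] at h2
    have hMW : M * W = 1 := by rw [hMWc.eq, hWM]
    have hWnil : (W - 1) ^ (2 * n) = 0 := by
      have h1 : W - 1 = -(W * N) := by
        have : W * N = W * M - W := by rw [hN, mul_sub, mul_one]
        rw [this, hWM]; abel
      rw [h1, (even_two_mul n).neg_pow, (hNW.symm).mul_pow, hunip t, mul_zero]
    have hconj : Mᵀ * Jstd n = Jstd n * W := by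
      have h1 : Mᵀ * Jstd n * M * W = Jstd n * W := by rw [hsymp t]
      rwa [mul_assoc (Mᵀ * Jstd n) M W, hMW, mul_one] at h1
    have hcomm : Commute (W - 1) (M - 1) := by
      have h1 : Commute (W - 1) N := (hNW.symm.sub_left (Commute.one_left N))
      rwa [← hN]
    have hprod : (1 + (W - 1)) * (1 + (M - 1)) = 1 := by
      have e1 : (1 : Matrix (Fin (2 * n)) (Fin (2 * n)) ℝ) + (W - 1) = W := by abel
      have e2 : (1 : Matrix (Fin (2 * n)) (Fin (2 * n)) ℝ) + (M - 1) = M := by abel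
      rw [e1, e2, hWM]
    have htr : (rp n x (M - 1))ᵀ = rp n x (Mᵀ - 1) := by
      rw [rp_transpose, Matrix.transpose_sub, Matrix.transpose_one]
    rw [hN, htr, rp_conj x hconj, mul_assoc,
      rp_mul_rp x hcomm hWnil (hunip t) hprod, mul_one]
end
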